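/- In propositional logic, a set of atoms I is a stable model of F in the Ferraris sense (I ⊨ F and no proper subset J ⊊ I satisfies F* evaluated with starred atoms under J and unstarred under I) if and only if I is a minimal model of the reduct F^I (I ⊨ F^I and no proper subset J ⊊ I satisfies F^I). -/
import Mathlib


/-- Propositional formulas over a set of atoms, with ⊤, ⊥, ∧, ∨, →. -/
inductive PForm (α : Type u) : Type u
  | atom (a : α)
  | top
  | bot
  | and (F G : PForm α)
  | or (F G : PForm α)
  | imp (F G : PForm α)

/-- Classical satisfaction of a propositional formula by a set of atoms. -/
def psat (I : Set α) : PForm α → Prop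
  | .atom a => a ∈ I
  | .top => True
  | .bot => False
  | .and F G => psat I F ∧ psat I G
  | .or F G => psat I F ∨ psat I G
  | .imp F G => psat I F → psat I G

open Classical in
/-- The Ferraris reduct `F^I`: each maximal subformula not satisfied by `I` is
replaced by `⊥`. -/
noncomputable def preduct (I : Set α) : PForm α → PForm α
  | .atom a => if a ∈ I then .atom a else .bot
  | .top => .top
  | .bot => .bot
  | .and F G => if psat I (.and F G) then .and (preduct I F) (preduct I G) else .bot
  | .or F G => if psat I (.or F G) then .or (preduct I F) (preduct I G) else .bot
  | .imp F G => if psat I (.imp F G) then .imp (preduct I F) (preduct I G) else .bot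

/-- The Ferraris star translation evaluated under the pair `(J, I)`: starred
atoms `p*` are true iff `p ∈ J`, `(F ∧ G)* = F* ∧ G*`, `(F ∨ G)* = F* ∨ G*`,
and `(F → G)* = (F* → G*) ∧ (F → G)` with the unstarred conjunct evaluated
under `I`. -/
def pstar (J I : Set α) : PForm α → Prop
  | .atom a => a ∈ J
  | .top => True
  | .bot => False
  | .and F G => pstar J I F ∧ pstar J I G
  | .or F G => pstar J I F ∨ pstar J I G
  | .imp F G => (pstar J I F → pstar J I G) ∧ (psat I F → psat I G)

lemma pstar_psat {α : Type u} {J I : Set α} (h : J ⊆ I) :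
    ∀ F : PForm α, pstar J I F → psat I F
  | .atom a, ha => h ha
  | .top, _ => trivial
  | .bot, hb => hb
  | .and F G, ⟨hf, hg⟩ => ⟨pstar_psat h F hf, pstar_psat h G hg⟩
  | .or F G, hfg => hfg.imp (pstar_psat h F) (pstar_psat h G)
  | .imp _ _, ⟨_, h2⟩ => h2

lemma pstar_iff_reduct {α : Type u} {J I : Set α} (h : J ⊆ I) :
    ∀ F : PForm α, pstar J I F ↔ psat J (preduct I F) := by
  intro F
  induction F with
  | atom a =>
    simp only [pstar, preduct]
    split <;> simp_all [psat]
    intro ha; exact ‹a ∉ I› (h ha)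
  | top => simp [pstar, preduct, psat]
  | bot => simp [pstar, preduct, psat]
  | and F G ihF ihG =>
    simp only [pstar, preduct]
    split
    · simp [psat, ihF, ihG]
    · next hI =>
      simp only [psat, iff_false]
      rintro ⟨hf, hg⟩
      exact hI ⟨pstar_psat h F hf, pstar_psat h G hg⟩
  | or F G ihF ihG =>
    simp only [pstar, preduct]
    split
    · simp [psat, ihF, ihG]
    · next hI =>
      simp only [psat, iff_false]
      rintro (hf | hg)
      · exact hI (Or.inl (pstar_psat h F hf))
      · exact hI (Or.inr (pstar_psat h G hg))
  | imp F G ihF ihG =>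
    simp only [pstar, preduct]
    split
    · next hI =>
      simp only [psat, ihF, ihG]
      exact ⟨fun ⟨h1, _⟩ => h1, fun h1 => ⟨h1, hI⟩⟩
    · next hI =>
      simp only [psat, iff_false]
      rintro ⟨_, h2⟩
      exact hI h2

lemma psat_reduct_self {α : Type u} (I : Set α) (F : PForm α) :
    psat I (preduct I F) ↔ psat I F := by
  rw [← pstar_iff_reduct (le_refl I) F]
  induction F with
  | atom a => rfl
  | top => rfl
  | bot => rfl
  | and F G ihF ihG => simp [pstar, psat, ihF, ihG]
  | or F G ihF ihG => simp [pstar, psat, ihF, ihG]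
  | imp F G ihF ihG => simp [pstar, psat, ihF, ihG]

/-- `I` is a Ferraris stable model of `F` (i.e. `I ⊨ F` and no
proper subset `J ⊊ I` satisfies `F*` evaluated under `(J, I)`) iff `I` is a
minimal model of the reduct `F^I` (i.e. `I ⊨ F^I` and no proper subset `J ⊊ I`
satisfies `F^I`). -/
theorem stmt_5 {α : Type u} (I : Set α) (F : PForm α) :
    (psat I F ∧ ¬ ∃ J : Set α, J ⊂ I ∧ pstar J I F) ↔
    (psat I (preduct I F) ∧ ¬ ∃ J : Set α, J ⊂ I ∧ psat J (preduct I F)) := by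
  rw [psat_reduct_self]
  refine and_congr_right fun _ => not_congr (exists_congr fun J => and_congr_right fun hJ => ?_)
  exact pstar_iff_reduct hJ.subset F
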